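/- A triangle multigraph T_{a,b,c} on three vertices is 𝒮₅-contractible if and only if a + b + c ≥ 8 and min{a+b, a+c, b+c} ≥ 4. -/

import Mathlib

open Finset

/-- A loopless multigraph on vertex type `V`, given by a symmetric multiplicity function. -/
structure Multigraph (V : Type*) where
  mult : V → V → ℕ
  symm : ∀ u v, mult u v = mult v u
  loopless : ∀ v, mult v v = 0

namespace Multigraph

variable {V W : Type*}

/-- The underlying simple graph (adjacency = positive multiplicity). -/
def toSimpleGraph (G : Multigraph V) : SimpleGraph V where
  Adj u v := 0 < G.mult u v
  symm := by
    constructor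
    intro u v h
    rwa [G.symm v u]
  loopless := by
    constructor
    intro v h
    simp [G.loopless v] at h

/-- Connectivity of a multigraph. -/
def Connected (G : Multigraph V) : Prop := G.toSimpleGraph.Connected

/-- Number of edges `e(G)`. -/
def edgeCount (G : Multigraph V) [Fintype V] : ℕ := (∑ u, ∑ v, G.mult u v) / 2

/-- `d(X)`: the number of edges with exactly one endpoint in `X`. -/
def cut (G : Multigraph V) [Fintype V] [DecidableEq V] (X : Finset V) : ℕ :=
  ∑ u ∈ X, ∑ v ∈ Xᶜ, G.mult u v

/-- Degree of a vertex (with multiplicity). -/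
def degree (G : Multigraph V) [Fintype V] (v : V) : ℕ := ∑ u, G.mult v u

/-- Number of edges of `G` with both endpoints in `A` (edges of the induced subgraph `G[A]`). -/
def edgesWithin (G : Multigraph V) (A : Finset V) : ℕ :=
  (∑ u ∈ A, ∑ v ∈ A, G.mult u v) / 2

/-- Weight of a family of parts: `Σ d(A) − 10·t + 16`. -/
def partsWeight (G : Multigraph V) [Fintype V] [DecidableEq V]
    (Ps : Finset (Finset V)) : ℤ :=
  (∑ A ∈ Ps, (G.cut A : ℤ)) - 10 * Ps.card + 16

/-- Weight `w_G(𝒫)` of a vertex partition `𝒫`. -/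
def pweight (G : Multigraph V) [Fintype V] [DecidableEq V]
    (P : Finpartition (univ : Finset V)) : ℤ :=
  G.partsWeight P.parts

/-- Weight `w_{G[A]}(Q)` of a partition `Q` of `A` in the induced subgraph `G[A]`. -/
def inducedWeight (G : Multigraph V) [DecidableEq V] (A : Finset V)
    (Q : Finpartition A) : ℤ :=
  (∑ B ∈ Q.parts, ((∑ u ∈ B, ∑ v ∈ A \ B, G.mult u v : ℕ) : ℤ))
    - 10 * Q.parts.card + 16

/-- Isomorphism of multigraphs. -/
def Iso (G : Multigraph V) (H : Multigraph W) : Prop :=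
  ∃ e : V ≃ W, ∀ u v, H.mult (e u) (e v) = G.mult u v

/-- Contraction `G/𝒫`: identify each part to a single vertex and delete loops. -/
def contract (G : Multigraph V) [Fintype V] [DecidableEq V]
    (P : Finpartition (univ : Finset V)) : Multigraph {A // A ∈ P.parts} where
  mult A B := if A = B then 0 else ∑ u ∈ A.1, ∑ v ∈ B.1, G.mult u v
  symm := by
    intro A B
    try dsimp only
    by_cases h : A = B
    · simp [h]
    · rw [if_neg h, if_neg (Ne.symm h), Finset.sum_comm]
      exact Finset.sum_congr rfl fun b _ => Finset.sum_congr rfl fun a _ => G.symm a b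
  loopless := by intro A; simp

/-- Adding one new edge between distinct existing vertices. -/
def addEdge (G : Multigraph V) [DecidableEq V] (x y : V) (hxy : x ≠ y) : Multigraph V where
  mult u v := G.mult u v + (if (u = x ∧ v = y) ∨ (u = y ∧ v = x) then 1 else 0)
  symm := by
    intro u v
    try dsimp only
    rw [G.symm u v]
    by_cases h1 : (u = x ∧ v = y) ∨ (u = y ∧ v = x)
    · rw [if_pos h1, if_pos (by tauto)]
    · rw [if_neg h1, if_neg (by tauto)]
  loopless := by
    intro v
    try dsimp only
    have h : ¬((v = x ∧ v = y) ∨ (v = y ∧ v = x)) := by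
      rintro (⟨rfl, rfl⟩ | ⟨rfl, rfl⟩) <;> exact hxy rfl
    simp [h, G.loopless]

/-- `aK₂`: two vertices joined by `a` parallel edges. -/
def kTwo (a : ℕ) : Multigraph (Fin 2) where
  mult u v := if u = v then 0 else a
  symm := by
    intro u v
    try dsimp only
    by_cases h : u = v
    · subst h; rfl
    · rw [if_neg h, if_neg (Ne.symm h)]
  loopless := by intro v; simp

def triMult (a b c : ℕ) : ℕ → ℕ → ℕ
  | 0, 1 => a | 1, 0 => a
  | 0, 2 => b | 2, 0 => b
  | 1, 2 => c | 2, 1 => c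
  | _, _ => 0

/-- `T_{a,b,c}`: three vertices, the three pairs joined by `a`, `b`, `c` parallel edges. -/
def triangle (a b c : ℕ) : Multigraph (Fin 3) where
  mult u v := triMult a b c u.val v.val
  symm := by intro u v; fin_cases u <;> fin_cases v <;> rfl
  loopless := by intro v; fin_cases v <;> rfl

def w1Mult : ℕ → ℕ → ℕ
  | 0, 1 => 1 | 1, 0 => 1 | 0, 2 => 1 | 2, 0 => 1 | 1, 2 => 1 | 2, 1 => 1
  | 0, 3 => 3 | 3, 0 => 3 | 1, 3 => 3 | 3, 1 => 3 | 2, 3 => 3 | 3, 2 => 3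
  | _, _ => 0

/-- The 4-vertex, 12-edge planar multigraph `W₁`: a triangle of single edges whose
three vertices are each joined to a central vertex by triple edges. -/
def W1 : Multigraph (Fin 4) where
  mult u v := w1Mult u.val v.val
  symm := by decide
  loopless := by decide

def w2Mult : ℕ → ℕ → ℕ
  | 0, 1 => 3 | 1, 0 => 3
  | 0, 2 => 2 | 2, 0 => 2 | 0, 3 => 2 | 3, 0 => 2
  | 1, 2 => 2 | 2, 1 => 2 | 1, 3 => 2 | 3, 1 => 2
  | 2, 3 => 1 | 3, 2 => 1
  | _, _ => 0

/-- The 4-vertex, 12-edge planar multigraph `W₂`. -/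
def W2 : Multigraph (Fin 4) where
  mult u v := w2Mult u.val v.val
  symm := by decide
  loopless := by decide

def q4Mult (a1 a2 a3 a4 : ℕ) : ℕ → ℕ → ℕ
  | 0, 1 => a1 | 1, 0 => a1
  | 1, 2 => a2 | 2, 1 => a2
  | 2, 3 => a3 | 3, 2 => a3
  | 3, 0 => a4 | 0, 3 => a4
  | _, _ => 0

/-- `Q_{a₁,a₂,a₃,a₄}`: the 4-cycle with edge multiplicities `a₁,…,a₄`. -/
def Q4 (a1 a2 a3 a4 : ℕ) : Multigraph (Fin 4) where
  mult u v := q4Mult a1 a2 a3 a4 u.val v.val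
  symm := by intro u v; fin_cases u <;> fin_cases v <;> rfl
  loopless := by intro v; fin_cases v <;> rfl

/-- Membership (up to isomorphism) in `𝒩₅ = {2K₂, 3K₂, T₁,₃,₃, T₂,₂,₃, W₁, W₂}`. -/
def InN5 (G : Multigraph V) : Prop :=
  G.Iso (kTwo 2) ∨ G.Iso (kTwo 3) ∨ G.Iso (triangle 1 3 3) ∨
    G.Iso (triangle 2 2 3) ∨ G.Iso W1 ∨ G.Iso W2

/-- `𝒮₅`-contractibility: `G` is connected, `w(G) ≥ 0` (every partition with at least
two parts has nonnegative weight), and no contraction of `G` lies in `𝒩₅`. -/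
def S5Contractible (G : Multigraph V) [Fintype V] [DecidableEq V] : Prop :=
  G.Connected ∧
    (∀ P : Finpartition (univ : Finset V), 2 ≤ P.parts.card → 0 ≤ G.pweight P) ∧
    (∀ P : Finpartition (univ : Finset V), ¬ InN5 (G.contract P))

/-- Strong `ℤ_ℓ`-connectivity: every zero-sum boundary `β` admits a `β`-orientation.
An orientation is encoded as `o : V → V → ℕ` where `o u v` is the number of the
`G.mult u v` parallel edges between `u` and `v` that are oriented from `u` to `v`. -/
def StronglyZConnected (G : Multigraph V) [Fintype V] (l : ℕ) : Prop :=
  ∀ β : V → ZMod l, ∑ v, β v = 0 →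
    ∃ o : V → V → ℕ, (∀ u v, o u v + o v u = G.mult u v) ∧
      ∀ v, (∑ u, (o v u : ZMod l)) - (∑ u, (o u v : ZMod l)) = β v

end Multigraph

open Multigraph

/-! A partition of a three-element vertex set is trivial, a bipartition `{X, Xᶜ}`, or the
partition into singletons. Contracting `{X, Xᶜ}` gives `d(X)·K₂`, of weight `2 d(X) - 4`, so this
bipartition is harmless exactly when `d(X) ≥ 4`; for `T_{a,b,c}` the values of `d(X)` are
`a + b`, `a + c`, `b + c`. Contracting into singletons gives back `T_{a,b,c}`, of weight
`2(a + b + c) - 14`, and once all cuts are at least `4` the only three-vertex members of `𝒩₅`,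
`T_{1,3,3}` and `T_{2,2,3}`, are up to isomorphism exactly the triangles with `a + b + c = 7`. -/

namespace Finpartition

variable {V : Type*} [Fintype V] [DecidableEq V]

theorem exists_parts_eq_pair_compl (P : Finpartition (univ : Finset V)) (h : #P.parts = 2) :
    ∃ X, P.parts = {X, Xᶜ} := by
  obtain ⟨X, Y, hXY, hP⟩ := card_eq_two.1 h
  have hdisj : Disjoint X Y := P.disjoint (by simp [hP]) (by simp [hP]) hXY
  have hcover : X ⊔ Y = univ := by simpa [hP] using P.sup_parts
  refine ⟨X, ?_⟩
  rw [hP, (IsCompl.of_eq hdisj.eq_bot hcover).compl_eq]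

theorem eq_bot_of_card_parts_eq (P : Finpartition (univ : Finset V))
    (h : #P.parts = Fintype.card V) : P = ⊥ := by
  let f : V → P.parts := fun v => ⟨P.part v, P.part_mem.2 (mem_univ v)⟩
  have hf : Function.Bijective f := by
    refine (Fintype.bijective_iff_surjective_and_card f).2 ⟨?_, by simp [h]⟩
    rintro ⟨A, hA⟩
    obtain ⟨v, hv⟩ := P.nonempty_of_mem_parts hA
    exact ⟨v, Subtype.ext (P.part_eq_of_mem hA hv)⟩
  have hpart : ∀ v, P.part v = {v} := fun v =>
    eq_singleton_iff_unique_mem.2 ⟨P.mem_part_self.2 (mem_univ v), fun x hx =>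
      hf.1 (Subtype.ext (P.part_eq_of_mem (P.part_mem.2 (mem_univ v)) hx))⟩
  ext A
  rw [mem_bot_iff]
  constructor
  · intro hA
    obtain ⟨v, hv⟩ := P.nonempty_of_mem_parts hA
    exact ⟨v, mem_univ v, (hpart v).symm.trans (P.part_eq_of_mem hA hv)⟩
  · rintro ⟨v, -, rfl⟩
    exact hpart v ▸ P.part_mem.2 (mem_univ v)

theorem card_parts_eq_one_or_exists_pair_or_eq_bot (hV : Fintype.card V = 3)
    (P : Finpartition (univ : Finset V)) :
    #P.parts = 1 ∨ (∃ X, P.parts = {X, Xᶜ}) ∨ P = ⊥ := by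
  have : Nonempty V := Fintype.card_pos_iff.1 (by omega)
  have hle := P.card_parts_le_card
  have hpos := (P.parts_nonempty univ_nonempty.ne_empty).card_pos
  rw [card_univ, hV] at hle
  interval_cases h : #P.parts
  · exact Or.inl rfl
  · exact Or.inr (Or.inl (P.exists_parts_eq_pair_compl h))
  · exact Or.inr (Or.inr (P.eq_bot_of_card_parts_eq (h.trans hV.symm)))

end Finpartition

namespace Multigraph

section Iso

variable {V W X : Type*}

theorem Iso.refl (G : Multigraph V) : G.Iso G := ⟨Equiv.refl V, fun _ _ => rfl⟩

theorem Iso.symm {G : Multigraph V} {H : Multigraph W} (h : G.Iso H) : H.Iso G := by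
  obtain ⟨e, he⟩ := h
  exact ⟨e.symm, fun u v => by simpa using (he (e.symm u) (e.symm v)).symm⟩

theorem Iso.trans {G : Multigraph V} {H : Multigraph W} {K : Multigraph X}
    (h₁ : G.Iso H) (h₂ : H.Iso K) : G.Iso K := by
  obtain ⟨e, he⟩ := h₁
  obtain ⟨f, hf⟩ := h₂
  exact ⟨e.trans f, fun u v => by simp [hf, he]⟩

theorem Iso.iso_iff {G : Multigraph V} {H : Multigraph W} (h : G.Iso H) {K : Multigraph X} :
    G.Iso K ↔ H.Iso K :=
  ⟨h.symm.trans, h.trans⟩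

theorem Iso.inN5_iff {G : Multigraph V} {H : Multigraph W} (h : G.Iso H) :
    InN5 G ↔ InN5 H := by
  simp only [InN5, h.iso_iff]

theorem Iso.card_eq [Fintype V] [Fintype W] {G : Multigraph V} {H : Multigraph W}
    (h : G.Iso H) : Fintype.card V = Fintype.card W :=
  h.elim fun e _ => Fintype.card_congr e

theorem Iso.sum_mult_eq [Fintype V] [Fintype W] {G : Multigraph V} {H : Multigraph W}
    (h : G.Iso H) : ∑ u, ∑ v, G.mult u v = ∑ u, ∑ v, H.mult u v := by
  obtain ⟨e, he⟩ := h
  rw [← e.sum_comp]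
  exact sum_congr rfl fun u _ => by rw [← e.sum_comp]; simp [he]

theorem InN5.two_le_card [Fintype V] {G : Multigraph V} (h : InN5 G) :
    2 ≤ Fintype.card V := by
  rcases h with h | h | h | h | h | h <;> simp [h.card_eq]

theorem Iso.kTwo_inj {m n : ℕ} (h : (kTwo m).Iso (kTwo n)) : m = n := by
  obtain ⟨e, he⟩ := h
  have h01 : e 0 ≠ e 1 := e.injective.ne (by decide)
  simpa [kTwo, h01] using (he 0 1).symm

theorem inN5_kTwo_iff {n : ℕ} : InN5 (kTwo n) ↔ n = 2 ∨ n = 3 := by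
  refine ⟨fun h => ?_, ?_⟩
  · rcases h with h | h | h | h | h | h
    · exact Or.inl h.kTwo_inj
    · exact Or.inr h.kTwo_inj
    all_goals simpa using h.card_eq
  · rintro (rfl | rfl)
    exacts [Or.inl (Iso.refl _), Or.inr (Or.inl (Iso.refl _))]

end Iso

section Cut

variable {V : Type*} [Fintype V] [DecidableEq V] (G : Multigraph V)

theorem cut_compl (X : Finset V) : G.cut Xᶜ = G.cut X := by
  rw [cut, cut, compl_compl, sum_comm]
  exact sum_congr rfl fun u _ => sum_congr rfl fun v _ => G.symm v u

theorem connected_of_cut_pos [Nonempty V]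
    (h : ∀ X : Finset V, X.Nonempty → Xᶜ.Nonempty → 0 < G.cut X) : G.Connected := by
  refine (SimpleGraph.connected_iff _).2 ⟨fun u v => ?_, inferInstance⟩
  classical
  by_contra huv
  set X := univ.filter (G.toSimpleGraph.Reachable u)
  obtain ⟨x, hx, y, hy, hxy⟩ : ∃ x ∈ X, ∃ y ∈ Xᶜ, 0 < G.mult x y := by
    simpa [cut, sum_pos_iff] using h X ⟨u, by simp [X]⟩ ⟨v, by simp [X, huv]⟩
  simp only [X, mem_compl, mem_filter, mem_univ, true_and] at hx hy
  exact hy (hx.trans (SimpleGraph.Adj.reachable hxy))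

theorem pweight_bot :
    G.pweight ⊥ = ∑ v, (G.cut {v} : ℤ) - 10 * Fintype.card V + 16 := by
  simp [pweight, partsWeight]

theorem contract_bot_iso : (G.contract ⊥).Iso G := by
  let e : V ≃ {A // A ∈ (⊥ : Finpartition (univ : Finset V)).parts} :=
    Equiv.ofBijective (fun v => ⟨{v}, by simp⟩) ⟨fun u v h => by simpa using h, by
      rintro ⟨A, hA⟩
      obtain ⟨v, -, rfl⟩ := Finpartition.mem_bot_iff.1 hA
      exact ⟨v, rfl⟩⟩
  refine ⟨e.symm, fun A B => ?_⟩
  obtain ⟨u, rfl⟩ := e.surjective A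
  obtain ⟨v, rfl⟩ := e.surjective B
  by_cases huv : u = v
  · subst huv
    rw [G.loopless, (G.contract ⊥).loopless]
  · have hne : e u ≠ e v := e.injective.ne huv
    simp only [contract, Equiv.symm_apply_apply, if_neg hne]
    exact (sum_singleton _ _).trans (sum_singleton _ _) |>.symm

variable {G} {P : Finpartition (univ : Finset V)} {X : Finset V}

theorem nonempty_of_parts_eq_pair (h : P.parts = {X, Xᶜ}) : X.Nonempty ∧ Xᶜ.Nonempty :=
  ⟨P.nonempty_of_mem_parts (h ▸ mem_insert_self X _),
    P.nonempty_of_mem_parts (h ▸ mem_insert_of_mem (mem_singleton_self _))⟩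

theorem ne_compl_of_parts_eq_pair (h : P.parts = {X, Xᶜ}) : X ≠ Xᶜ := by
  obtain ⟨x, hx⟩ := (nonempty_of_parts_eq_pair h).1
  exact fun hX => (mem_compl.1 (hX ▸ hx)) hx

theorem eq_or_eq_compl_of_mem_parts {A : Finset V} (h : P.parts = {X, Xᶜ}) (hA : A ∈ P.parts) :
    A = X ∨ A = Xᶜ := by
  simpa [h] using hA

theorem pweight_of_parts_eq_pair (h : P.parts = {X, Xᶜ}) :
    G.pweight P = 2 * G.cut X - 4 := by
  rw [pweight, partsWeight, h, sum_pair (ne_compl_of_parts_eq_pair h),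
    card_pair (ne_compl_of_parts_eq_pair h), cut_compl]
  ring

theorem contract_iso_kTwo_of_parts_eq_pair (h : P.parts = {X, Xᶜ}) :
    (G.contract P).Iso (kTwo (G.cut X)) := by
  have hX : X ∈ P.parts := h ▸ mem_insert_self X _
  have hXc : Xᶜ ∈ P.parts := h ▸ mem_insert_of_mem (mem_singleton_self _)
  have hne := ne_compl_of_parts_eq_pair h
  let e : {A // A ∈ P.parts} ≃ Fin 2 :=
    { toFun := fun A => if A.1 = X then 0 else 1
      invFun := fun i => if i = 0 then ⟨X, hX⟩ else ⟨Xᶜ, hXc⟩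
      left_inv := by
        rintro ⟨A, hA⟩
        rcases eq_or_eq_compl_of_mem_parts h hA with rfl | rfl <;> simp [hne.symm]
      right_inv := by
        intro i
        fin_cases i <;> simp [hne.symm] }
  have cross : ∀ A B : {A // A ∈ P.parts}, A.1 = X → B.1 = Xᶜ →
      (kTwo (G.cut X)).mult (e A) (e B) = (G.contract P).mult A B := by
    intro A B hA hB
    have hAB : A ≠ B := fun hAB => hne (hA.symm.trans (congrArg Subtype.val hAB ▸ hB))
    simp [e, contract, kTwo, hA, hB, hAB, hne.symm, cut]
  refine ⟨e, fun A B => ?_⟩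
  rcases eq_or_eq_compl_of_mem_parts h A.2 with hA | hA <;> rcases eq_or_eq_compl_of_mem_parts h B.2 with hB | hB
  · rw [Subtype.ext (hA.trans hB.symm), (kTwo _).loopless, (G.contract P).loopless]
  · exact cross A B hA hB
  · rw [(kTwo _).symm, (G.contract P).symm]
    exact cross B A hB hA
  · rw [Subtype.ext (hA.trans hB.symm), (kTwo _).loopless, (G.contract P).loopless]

end Cut

section S5Contractible

variable {V : Type*} [Fintype V] [DecidableEq V] {G : Multigraph V}

theorem S5Contractible.four_le_cut (hG : S5Contractible G) {X : Finset V} (hX : X.Nonempty)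
    (hXc : Xᶜ.Nonempty) : 4 ≤ G.cut X := by
  let P := (Finpartition.indiscrete hX.ne_empty).extend hXc.ne_empty disjoint_compl_right
    X.union_compl
  have hP : P.parts = {X, Xᶜ} := by simp [P, pair_comm]
  have hw := hG.2.1 P (by rw [hP, card_pair (ne_compl_of_parts_eq_pair hP)])
  have hN := hG.2.2 P
  rw [pweight_of_parts_eq_pair hP] at hw
  rw [(contract_iso_kTwo_of_parts_eq_pair hP).inN5_iff, inN5_kTwo_iff] at hN
  omega

theorem S5Contractible.not_inN5 (hG : S5Contractible G) : ¬ InN5 G :=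
  G.contract_bot_iso.inN5_iff.not.1 (hG.2.2 ⊥)

theorem s5Contractible_iff_of_card_eq_three (hV : Fintype.card V = 3) :
    S5Contractible G ↔
      (∀ X : Finset V, X.Nonempty → Xᶜ.Nonempty → 4 ≤ G.cut X) ∧ 0 ≤ G.pweight ⊥ ∧
        ¬ InN5 G := by
  refine ⟨fun hG => ⟨fun X => hG.four_le_cut, hG.2.1 ⊥ (by simp [hV]), hG.not_inN5⟩, ?_⟩
  rintro ⟨hcut, hbot, hN⟩
  have : Nonempty V := Fintype.card_pos_iff.1 (by omega)
  have hcut_pair : ∀ {P : Finpartition (univ : Finset V)} {X}, P.parts = {X, Xᶜ} →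
      4 ≤ G.cut X := fun h => hcut _ (nonempty_of_parts_eq_pair h).1
        (nonempty_of_parts_eq_pair h).2
  refine ⟨G.connected_of_cut_pos fun X hX hXc => by have := hcut X hX hXc; omega,
    fun P hP => ?_, fun P => ?_⟩
  · rcases P.card_parts_eq_one_or_exists_pair_or_eq_bot hV with h | ⟨X, h⟩ | rfl
    · omega
    · have := hcut_pair h
      rw [pweight_of_parts_eq_pair h]
      omega
    · exact hbot
  · rcases P.card_parts_eq_one_or_exists_pair_or_eq_bot hV with h | ⟨X, h⟩ | rfl
    · exact fun hP => by simpa [h] using hP.two_le_card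
    · have := hcut_pair h
      rw [(contract_iso_kTwo_of_parts_eq_pair h).inN5_iff, inN5_kTwo_iff]
      omega
    · rwa [G.contract_bot_iso.inN5_iff]

end S5Contractible

section Triangle

variable {a b c : ℕ}

theorem triangle_iso_swap_left : (triangle a b c).Iso (triangle b a c) :=
  ⟨Equiv.swap 1 2, by intro u v; fin_cases u <;> fin_cases v <;> rfl⟩

theorem triangle_iso_swap_right : (triangle a b c).Iso (triangle a c b) :=
  ⟨Equiv.swap 0 1, by intro u v; fin_cases u <;> fin_cases v <;> rfl⟩

theorem triangle_cut_zero : (triangle a b c).cut {0} = a + b := by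
  simp [cut, triangle, triMult, show ({0}ᶜ : Finset (Fin 3)) = {1, 2} by decide]

theorem triangle_cut_one : (triangle a b c).cut {1} = a + c := by
  simp [cut, triangle, triMult, show ({1}ᶜ : Finset (Fin 3)) = {0, 2} by decide]

theorem triangle_cut_two : (triangle a b c).cut {2} = b + c := by
  simp [cut, triangle, triMult, show ({2}ᶜ : Finset (Fin 3)) = {0, 1} by decide]

theorem triangle_sum_mult : ∑ u, ∑ v, (triangle a b c).mult u v = 2 * (a + b + c) := by
  simp [triangle, triMult, Fin.sum_univ_three]
  ring

theorem triangle_pweight_bot : (triangle a b c).pweight ⊥ = 2 * ((a + b + c : ℕ) : ℤ) - 14 := by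
  rw [pweight_bot, Fin.sum_univ_three, triangle_cut_zero, triangle_cut_one, triangle_cut_two,
    Fintype.card_fin]
  push_cast
  ring

theorem triangle_four_le_cut_iff :
    (∀ X : Finset (Fin 3), X.Nonempty → Xᶜ.Nonempty → 4 ≤ (triangle a b c).cut X) ↔
      4 ≤ a + b ∧ 4 ≤ a + c ∧ 4 ≤ b + c := by
  have hsubsets : ∀ X : Finset (Fin 3), X.Nonempty → Xᶜ.Nonempty →
      ∃ i, X = {i} ∨ X = {i}ᶜ := by decide
  refine ⟨fun h => ⟨?_, ?_, ?_⟩, fun ⟨hab, hac, hbc⟩ X hX hXc => ?_⟩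
  · simpa [triangle_cut_zero] using h {0} (by simp) (by decide)
  · simpa [triangle_cut_one] using h {1} (by simp) (by decide)
  · simpa [triangle_cut_two] using h {2} (by simp) (by decide)
  · have hsingleton : ∀ i, 4 ≤ (triangle a b c).cut {i} := by
      intro i
      fin_cases i
      exacts [triangle_cut_zero ▸ hab, triangle_cut_one ▸ hac, triangle_cut_two ▸ hbc]
    obtain ⟨i, rfl | rfl⟩ := hsubsets X hX hXc
    · exact hsingleton i
    · rw [cut_compl]
      exact hsingleton i

theorem triangle_inN5_iff (hab : 4 ≤ a + b) (hac : 4 ≤ a + c) (hbc : 4 ≤ b + c) :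
    InN5 (triangle a b c) ↔ a + b + c = 7 := by
  refine ⟨fun h => ?_, fun h => ?_⟩
  · rcases h with h | h | h | h | h | h
    · simpa using h.card_eq
    · simpa using h.card_eq
    · have := h.sum_mult_eq
      rw [triangle_sum_mult, triangle_sum_mult] at this
      omega
    · have := h.sum_mult_eq
      rw [triangle_sum_mult, triangle_sum_mult] at this
      omega
    · simpa using h.card_eq
    · simpa using h.card_eq
  · have h133 : InN5 (triangle 1 3 3) := Or.inr (Or.inr (Or.inl (Iso.refl _)))
    have h223 : InN5 (triangle 2 2 3) := Or.inr (Or.inr (Or.inr (Or.inl (Iso.refl _))))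
    obtain ⟨rfl, rfl, rfl⟩ | ⟨rfl, rfl, rfl⟩ | ⟨rfl, rfl, rfl⟩ | ⟨rfl, rfl, rfl⟩ |
        ⟨rfl, rfl, rfl⟩ | ⟨rfl, rfl, rfl⟩ :
        a = 1 ∧ b = 3 ∧ c = 3 ∨ a = 3 ∧ b = 1 ∧ c = 3 ∨ a = 3 ∧ b = 3 ∧ c = 1 ∨
        a = 2 ∧ b = 2 ∧ c = 3 ∨ a = 2 ∧ b = 3 ∧ c = 2 ∨ a = 3 ∧ b = 2 ∧ c = 2 := by omega
    · exact h133
    · exact triangle_iso_swap_left.inN5_iff.2 h133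
    · exact (triangle_iso_swap_right.trans triangle_iso_swap_left).inN5_iff.2 h133
    · exact h223
    · exact triangle_iso_swap_right.inN5_iff.2 h223
    · exact (triangle_iso_swap_left.trans triangle_iso_swap_right).inN5_iff.2 h223

end Triangle

end Multigraph

/-- `T_{a,b,c}` is `𝒮₅`-contractible iff `a + b + c ≥ 8` and
`min{a+b, a+c, b+c} ≥ 4`. -/
theorem s5_triangle (a b c : ℕ) :
    S5Contractible (triangle a b c) ↔
      8 ≤ a + b + c ∧ 4 ≤ a + b ∧ 4 ≤ a + c ∧ 4 ≤ b + c := by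
  rw [s5Contractible_iff_of_card_eq_three (Fintype.card_fin 3), triangle_four_le_cut_iff,
    triangle_pweight_bot]
  constructor
  · rintro ⟨⟨hab, hac, hbc⟩, hw, hN⟩
    rw [triangle_inN5_iff hab hac hbc] at hN
    omega
  · rintro ⟨h8, hab, hac, hbc⟩
    refine ⟨⟨hab, hac, hbc⟩, by omega, ?_⟩
    rw [triangle_inN5_iff hab hac hbc]
    omega
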